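/- Let (A, (f,g)) be a dibaric algebra and let {F₁, …, F_m} be a basis of the subspace J_f of f-invariant linear forms. Then A is conservative if and only if there exist elements u_{ik} ∈ A (1 ≤ i, k ≤ m) with u_{ik} = u_{ki} such that xy = Σ_{i,k=1}^m F_i(x) F_k(y) u_{ik} for all x, y ∈ A. -/

import Mathlib

/-!
The `F i` are linearly independent, so there are `e i` with `F k (e i) = δ i k`. As the `F i`
span `J_f`, `J_f^⊥` is their common kernel and contains `x - ∑ F i x • e i`; if `A` is conservative
this element annihilates `A`, and expanding `x * y` bilinearly gives `u i k = e i * e k`.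
Conversely, such a formula makes every element of `J_f^⊥` annihilate `A`, while `ann A ⊆ J_f^⊥`
holds as soon as `f ≠ 0`.
-/

section Dibaric

variable {K M N : Type*} [Field K] [AddCommGroup M] [Module K M] [AddCommGroup N] [Module K N]

def IsInvariantForm (mul : M →ₗ[K] M →ₗ[K] M) (f G : M →ₗ[K] K) : Prop :=
  ∀ a b : M, G (mul a b) = (f a * G b + f b * G a) / 2

def invariantPerp (mul : M →ₗ[K] M →ₗ[K] M) (f : M →ₗ[K] K) : Set M :=
  {z | ∀ G : M →ₗ[K] K, IsInvariantForm mul f G → G z = 0}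

def annihilator (mul : M →ₗ[K] M →ₗ[K] N) : Set M :=
  {z | ∀ t : M, mul z t = 0}

theorem annihilator_subset_invariantPerp [NeZero (2 : K)] {mul : M →ₗ[K] M →ₗ[K] M}
    {f : M →ₗ[K] K} (hf : f ≠ 0) : annihilator mul ⊆ invariantPerp mul f := by
  intro z hz G hG
  obtain ⟨t, ht⟩ : ∃ t, f t ≠ 0 := not_forall.1 fun h => hf (LinearMap.ext h)
  have hzz : f z * G z = 0 := by simpa [hz z] using (hG z z).symm
  have hzt : f z * G t + f t * G z = 0 := by simpa [hz t, two_ne_zero] using (hG z t).symm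
  rcases mul_eq_zero.1 hzz with hfz | hGz
  · simpa [hfz, ht] using hzt
  · exact hGz

theorem mem_invariantPerp_of_forall_apply_eq_zero {ι : Type*} {mul : M →ₗ[K] M →ₗ[K] M}
    {f : M →ₗ[K] K} {F : ι → M →ₗ[K] K}
    (hspan : ∀ G, IsInvariantForm mul f G → G ∈ Submodule.span K (Set.range F))
    {z : M} (hz : ∀ i, F i z = 0) : z ∈ invariantPerp mul f := by
  have hker : Submodule.span K (Set.range F) ≤ LinearMap.ker (Module.Dual.eval K M z) := by
    rw [Submodule.span_le]
    rintro _ ⟨i, rfl⟩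
    exact hz i
  exact fun G hG => hker (hspan G hG)

theorem LinearIndependent.surjective_pi {ι : Type*} [Finite ι] {F : ι → M →ₗ[K] K}
    (hF : LinearIndependent K F) : Function.Surjective (LinearMap.pi F) := by
  have hF' : LinearIndependent K fun i => ⇑(F i) :=
    hF.map' (LinearMap.ltoFun K M K K) (LinearMap.ker_eq_bot.2 DFunLike.coe_injective)
  rw [← LinearMap.range_eq_top, eq_top_iff, ← span_flip_eq_top_iff_linearIndependent.2 hF',
    Submodule.span_le]
  rintro _ ⟨x, rfl⟩
  exact ⟨x, rfl⟩

theorem apply_eq_sum_of_ker_subset_annihilator {ι : Type*} [Fintype ι] [DecidableEq ι]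
    {mul : M →ₗ[K] M →ₗ[K] N} (hcomm : ∀ x y, mul x y = mul y x)
    {F : ι → M →ₗ[K] K} {e : ι → M} (he : ∀ i, LinearMap.pi F (e i) = Pi.single i 1)
    (hann : ∀ z, (∀ i, F i z = 0) → z ∈ annihilator mul) (x y : M) :
    mul x y = ∑ i, ∑ k, (F i x * F k y) • mul (e i) (e k) := by
  set P : M → M := fun a => ∑ i, F i a • e i
  have hP : ∀ a t, mul a t = mul (P a) t := fun a t => by
    have hF : ∀ k, F k (a - P a) = 0 := fun k => by
      have hek : ∀ i, F k (e i) = if k = i then 1 else 0 := fun i => by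
        simpa [Pi.single_apply] using congrFun (he i) k
      simp [P, hek]
    simpa [sub_eq_zero] using hann _ hF t
  calc mul x y = mul (P x) (P y) := by rw [hP, hcomm, hP, hcomm]
    _ = ∑ i, ∑ k, (F i x * F k y) • mul (e i) (e k) := by
      simp only [P, map_sum, map_smul, LinearMap.sum_apply, LinearMap.smul_apply,
        Finset.smul_sum, smul_smul]
      rw [Finset.sum_comm]
      simp_rw [mul_comm]

theorem mem_annihilator_of_forall_apply_eq_zero {ι : Type*} [Fintype ι]
    {mul : M →ₗ[K] M →ₗ[K] N} {F : ι → M →ₗ[K] K} {u : ι → ι → N}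
    (hu : ∀ x y, mul x y = ∑ i, ∑ k, (F i x * F k y) • u i k) {z : M} (hz : ∀ i, F i z = 0) :
    z ∈ annihilator mul := fun t => by simp [hu, hz]

end Dibaric

theorem stmt_6 (A : Type*) [AddCommGroup A] [Module ℝ A]
    (mul : A →ₗ[ℝ] A →ₗ[ℝ] A)
    (hcomm : ∀ x y : A, mul x y = mul y x)
    (f : A →ₗ[ℝ] ℝ) (hf : f ≠ 0)
    (m : ℕ) (F : Fin m → (A →ₗ[ℝ] ℝ))
    (hFinv : ∀ i : Fin m, ∀ a b : A, (F i) (mul a b) = (f a * (F i) b + f b * (F i) a) / 2)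
    (hFindep : LinearIndependent ℝ F)
    (hFspan : ∀ G : A →ₗ[ℝ] ℝ,
      (∀ a b : A, G (mul a b) = (f a * G b + f b * G a) / 2) →
      G ∈ Submodule.span ℝ (Set.range F)) :
    ({z : A | ∀ G : A →ₗ[ℝ] ℝ,
        (∀ a b : A, G (mul a b) = (f a * G b + f b * G a) / 2) → G z = 0}
      = {z : A | ∀ t : A, mul z t = 0})
    ↔
    (∃ u : Fin m → Fin m → A, (∀ i k : Fin m, u i k = u k i) ∧
      ∀ x y : A, mul x y = ∑ i : Fin m, ∑ k : Fin m, (F i x * F k y) • u i k) := by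
  change invariantPerp mul f = annihilator mul ↔ _
  constructor
  · intro hcons
    choose e he using fun i => hFindep.surjective_pi (Pi.single i 1)
    refine ⟨fun i k => mul (e i) (e k), fun i k => hcomm _ _,
      apply_eq_sum_of_ker_subset_annihilator hcomm he fun z hz => ?_⟩
    exact hcons ▸ mem_invariantPerp_of_forall_apply_eq_zero hFspan hz
  · rintro ⟨u, -, hu⟩
    refine subset_antisymm (fun z hz => ?_) (annihilator_subset_invariantPerp hf)
    exact mem_annihilator_of_forall_apply_eq_zero hu fun i => hz (F i) (hFinv i)
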